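/- arXiv:2212.08113 — 2 statements merged into one kernel-verified Lean document; each statement's English description precedes it below -/
import Mathlib

section
/- For every 1 ≤ t ≤ mn, one has Σ_{k=1}^n X_{k,t} ≥ (1/2)·(c(g_t,t) − a(g_t,t)/n)² − 3·Σ_{i=1}^{mn} z_i − 4m. -/
open Finset

/-- `a(k,t)`: the number of rounds `1 ≤ i < t` in which label `k` was guessed. -/
def cntA (g : ℕ → ℕ) (k t : ℕ) : ℕ :=
  ((Finset.Ico 1 t).filter fun i => g i = k).card

/-- `c(k,t)`: the number of rounds `1 ≤ i < t` in which label `k` was guessed and `z i = 1`. -/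
def cntB (g z : ℕ → ℕ) (k t : ℕ) : ℕ :=
  ((Finset.Ico 1 t).filter fun i => g i = k ∧ z i = 1).card

/-- `Y := ⌊(√m)·n/6⌋`. -/
noncomputable def Yval (m n : ℕ) : ℕ := ⌊Real.sqrt m * n / 6⌋₊

/-- The function `f(x) = x²` for `x ≤ 0`, `f(x) = 0` for `0 < x < c`, and `f(x) = (x − c)²`
for `x ≥ c`. -/
noncomputable def fFun (c x : ℝ) : ℝ :=
  if x ≤ 0 then x ^ 2 else if x < c then 0 else (x - c) ^ 2

/-- `X_{k,t} := f(c(k,t) − a(k,t)/n) − 3·c(k,t) − 3·a(k,t)/n` with `f` taken at threshold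
`c := Y/n`. -/
noncomputable def Xproc (m n : ℕ) (g z : ℕ → ℕ) (k t : ℕ) : ℝ :=
  fFun ((Yval m n : ℝ) / n) ((cntB g z k t : ℝ) - (cntA g k t : ℝ) / n)
    - 3 * (cntB g z k t : ℝ) - 3 * (cntA g k t : ℝ) / n

lemma fFun_nonneg (c x : ℝ) : 0 ≤ fFun c x := by
  unfold fFun; split_ifs <;> positivity

lemma fFun_ge (c x : ℝ) (hc : 0 ≤ c) : x ^ 2 / 2 - c ^ 2 ≤ fFun c x := by
  unfold fFun
  split_ifs with h1 h2
  · nlinarith [sq_nonneg x, sq_nonneg c]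
  · nlinarith [sq_nonneg x]
  · nlinarith [sq_nonneg (x - 2 * c)]

/-- for every `1 ≤ t ≤ mn`,
`Σ_{k=1}^n X_{k,t} ≥ (1/2)·(c(g_t,t) − a(g_t,t)/n)² − 3·Σ_{i=1}^{mn} z_i − 4m`. -/
theorem sum_Xproc_ge
    (m n : ℕ) (hm : 0 < m) (hn : 0 < n)
    (g z : ℕ → ℕ)
    (hg : ∀ i ∈ Finset.Icc 1 (m * n), g i ∈ Finset.Icc 1 n)
    (hz : ∀ i ∈ Finset.Icc 1 (m * n), z i = 0 ∨ z i = 1) :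
    ∀ t ∈ Finset.Icc 1 (m * n),
      ∑ k ∈ Finset.Icc 1 n, Xproc m n g z k t
        ≥ 1 / 2 * ((cntB g z (g t) t : ℝ) - (cntA g (g t) t : ℝ) / n) ^ 2
            - 3 * ∑ i ∈ Finset.Icc 1 (m * n), (z i : ℝ) - 4 * m := by
  intro t ht
  have ht' := Finset.mem_Icc.mp ht
  have hgt : g t ∈ Finset.Icc 1 n := hg t ht
  have hn' : (0:ℝ) < n := by exact_mod_cast hn
  set c : ℝ := (Yval m n : ℝ) / n with hcdef
  have hc0 : 0 ≤ c := by positivity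
  -- c² ≤ m
  have hY : (Yval m n : ℝ) ≤ Real.sqrt m * n / 6 := Nat.floor_le (by positivity)
  have hcs : c ≤ Real.sqrt m / 6 := by
    rw [hcdef, div_le_iff₀ hn']
    calc (Yval m n : ℝ) ≤ Real.sqrt m * n / 6 := hY
      _ = Real.sqrt m / 6 * n := by ring
  have hc2 : c ^ 2 ≤ m := by
    have h1 : c ^ 2 ≤ (Real.sqrt m / 6) ^ 2 := by
      have := pow_le_pow_left₀ hc0 hcs 2
      exact this
    have h2 : Real.sqrt m ^ 2 = m := Real.sq_sqrt (by positivity)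
    have hm1 : (1:ℝ) ≤ m := by exact_mod_cast hm
    nlinarith
  -- sum of A over k
  have hAsum : ∑ k ∈ Finset.Icc 1 n, cntA g k t = t - 1 := by
    unfold cntA
    rw [← Finset.card_eq_sum_card_fiberwise (f := g) (fun i hi => by
      obtain ⟨h1, h2⟩ := Finset.mem_Ico.mp hi
      exact hg i (Finset.mem_Icc.mpr ⟨h1, le_trans (Nat.le_of_lt_succ (Nat.lt_succ_of_lt h2)) ht'.2⟩))]
    simp [Nat.card_Ico]
  -- sum of C over k
  have hCsum : ∑ k ∈ Finset.Icc 1 n, cntB g z k t ≤ ∑ i ∈ Finset.Icc 1 (m * n), z i := by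
    unfold cntB
    have hrw : ∀ k, ((Finset.Ico 1 t).filter fun i => g i = k ∧ z i = 1)
        = (((Finset.Ico 1 t).filter fun i => z i = 1).filter fun i => g i = k) := by
      intro k; rw [Finset.filter_filter]; apply Finset.filter_congr; intro i _; tauto
    simp only [hrw]
    rw [← Finset.card_eq_sum_card_fiberwise (f := g) (fun i hi => by
      have hi' := Finset.mem_filter.mp hi
      obtain ⟨h1, h2⟩ := Finset.mem_Ico.mp hi'.1
      exact hg i (Finset.mem_Icc.mpr ⟨h1, le_trans (Nat.le_of_lt_succ (Nat.lt_succ_of_lt h2)) ht'.2⟩))]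
    calc ((Finset.Ico 1 t).filter fun i => z i = 1).card
        ≤ ∑ i ∈ Finset.Ico 1 t, z i := by
          rw [Finset.card_filter]
          apply Finset.sum_le_sum
          intro i _; split_ifs with h
          · omega
          · exact Nat.zero_le _
      _ ≤ ∑ i ∈ Finset.Icc 1 (m * n), z i := by
          apply Finset.sum_le_sum_of_subset
          intro i hi
          obtain ⟨h1, h2⟩ := Finset.mem_Ico.mp hi
          exact Finset.mem_Icc.mpr ⟨h1, by omega⟩
  -- split the sum
  have hsplit : ∑ k ∈ Finset.Icc 1 n, Xproc m n g z k t
      = (∑ k ∈ Finset.Icc 1 n, fFun c ((cntB g z k t : ℝ) - (cntA g k t : ℝ) / n))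
        - 3 * (∑ k ∈ Finset.Icc 1 n, (cntB g z k t : ℝ))
        - 3 * (∑ k ∈ Finset.Icc 1 n, (cntA g k t : ℝ)) / n := by
    simp only [Xproc, ← hcdef]
    rw [Finset.sum_sub_distrib, Finset.sum_sub_distrib, ← Finset.mul_sum,
      ← Finset.sum_div, ← Finset.mul_sum]
  -- lower bound on fFun sum
  have hF : fFun c ((cntB g z (g t) t : ℝ) - (cntA g (g t) t : ℝ) / n)
      ≤ ∑ k ∈ Finset.Icc 1 n, fFun c ((cntB g z k t : ℝ) - (cntA g k t : ℝ) / n) :=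
    Finset.single_le_sum (f := fun k => fFun c ((cntB g z k t : ℝ) - (cntA g k t : ℝ) / n)) (fun k _ => fFun_nonneg _ _) hgt
  have hFlb := fFun_ge c ((cntB g z (g t) t : ℝ) - (cntA g (g t) t : ℝ) / n) hc0
  -- casts
  have hCcast : (∑ k ∈ Finset.Icc 1 n, (cntB g z k t : ℝ))
      ≤ ∑ i ∈ Finset.Icc 1 (m * n), (z i : ℝ) := by
    have := hCsum
    push_cast [← Nat.cast_sum]
    exact_mod_cast this
  have hAcast : (∑ k ∈ Finset.Icc 1 n, (cntA g k t : ℝ)) = (t : ℝ) - 1 := by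
    rw [← Nat.cast_sum, hAsum, Nat.cast_sub ht'.1]
    norm_num
  have htm : (t : ℝ) ≤ (m : ℝ) * n := by exact_mod_cast ht'.2
  -- 3*(t-1)/n ≤ 3*m
  have hA3 : 3 * ((t : ℝ) - 1) / n ≤ 3 * m := by
    rw [div_le_iff₀ hn']
    nlinarith
  rw [hsplit, hAcast]
  have hsB : (0:ℝ) ≤ ∑ k ∈ Finset.Icc 1 n, (cntB g z k t : ℝ) :=
    Finset.sum_nonneg fun k _ => by positivity
  linarith
end

section
/- Let τ be the least index 1 ≤ t ≤ mn with w_t = 0, and τ := mn+1 if w_t = 1 for all t. Then Σ_{k=1}^n (X_{k,τ} + X_{k,mn+1}) ≥ (1/4)·(Σ_{i=1}^{mn} (1 − w_i)(z_i − 1/n))² − 6·Σ_{i=1}^{mn} z_i − 8m. -/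
open Finset

/-- `w_t`: the real-valued indicator of the event `a(g_t,t) ≤ mn/2`. -/
noncomputable def wInd (m n : ℕ) (g : ℕ → ℕ) (t : ℕ) : ℝ :=
  if (cntA g (g t) t : ℝ) ≤ (m * n : ℝ) / 2 then 1 else 0

lemma fFun_add_ge (c x y : ℝ) (hc : 0 ≤ c) :
    1/4 * (y - x)^2 - 2 * c^2 ≤ fFun c x + fFun c y := by
  have key : ∀ u v : ℝ, u ≤ 0 ∨ (0 < u ∧ u < c) ∨ c ≤ u →
      (fFun c u = u^2 ∧ u ≤ 0) ∨ (fFun c u = 0 ∧ 0 < u ∧ u < c) ∨ (fFun c u = (u-c)^2 ∧ c ≤ u) := by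
    intro u v h
    unfold fFun
    rcases h with h | ⟨h1, h2⟩ | h
    · exact Or.inl ⟨if_pos h, h⟩
    · exact Or.inr (Or.inl ⟨by rw [if_neg (not_le.2 h1), if_pos h2], h1, h2⟩)
    · rcases le_or_gt u 0 with h0 | h0
      · exact Or.inl ⟨if_pos h0, h0⟩
      · exact Or.inr (Or.inr ⟨by rw [if_neg (not_le.2 h0), if_neg (not_lt.2 h)], h⟩)
  have trich : ∀ u : ℝ, u ≤ 0 ∨ (0 < u ∧ u < c) ∨ c ≤ u := by
    intro u
    rcases le_or_gt u 0 with h | h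
    · exact Or.inl h
    · rcases lt_or_ge u c with h2 | h2
      · exact Or.inr (Or.inl ⟨h, h2⟩)
      · exact Or.inr (Or.inr h2)
  rcases key x x (trich x) with ⟨ex, hx⟩ | ⟨ex, hx1, hx2⟩ | ⟨ex, hx⟩ <;>
    rcases key y y (trich y) with ⟨ey, hy⟩ | ⟨ey, hy1, hy2⟩ | ⟨ey, hy⟩ <;>
    rw [ex, ey] <;>
    nlinarith [sq_nonneg (x+y), sq_nonneg (x-y), sq_nonneg (x+y-c), sq_nonneg (x+y-2*c), sq_nonneg c]

lemma sum_cntA_le (g : ℕ → ℕ) (n t : ℕ) :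
    ∑ k ∈ Finset.Icc 1 n, cntA g k t ≤ t - 1 := by
  unfold cntA
  classical
  have h := Finset.card_biUnion (s := Finset.Icc 1 n)
    (t := fun k => (Finset.Ico 1 t).filter fun i => g i = k) ?_
  · calc ∑ k ∈ Finset.Icc 1 n, ((Finset.Ico 1 t).filter fun i => g i = k).card
        = ((Finset.Icc 1 n).biUnion fun k => (Finset.Ico 1 t).filter fun i => g i = k).card := h.symm
      _ ≤ (Finset.Ico 1 t).card := by
          apply Finset.card_le_card
          intro i hi
          simp only [Finset.mem_biUnion, Finset.mem_filter] at hi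
          obtain ⟨k, _, hk, _⟩ := hi
          exact hk
      _ = t - 1 := Nat.card_Ico 1 t
  · intro a _ b _ hab
    simp only [Finset.disjoint_left, Finset.mem_filter]
    rintro i ⟨_, rfl⟩ ⟨_, h2⟩
    exact hab h2

lemma sum_cntB_le (g z : ℕ → ℕ) (n t T : ℕ) (ht : t ≤ T + 1) :
    ∑ k ∈ Finset.Icc 1 n, cntB g z k t ≤ ∑ i ∈ Finset.Icc 1 T, z i := by
  unfold cntB
  classical
  have h := Finset.card_biUnion (s := Finset.Icc 1 n)
    (t := fun k => (Finset.Ico 1 t).filter fun i => g i = k ∧ z i = 1) ?_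
  · calc ∑ k ∈ Finset.Icc 1 n, ((Finset.Ico 1 t).filter fun i => g i = k ∧ z i = 1).card
        = ((Finset.Icc 1 n).biUnion fun k => (Finset.Ico 1 t).filter fun i => g i = k ∧ z i = 1).card := h.symm
      _ ≤ ((Finset.Icc 1 T).filter fun i => z i = 1).card := by
          apply Finset.card_le_card
          intro i hi
          simp only [Finset.mem_biUnion, Finset.mem_filter, Finset.mem_Ico, Finset.mem_Icc] at hi ⊢
          obtain ⟨k, _, ⟨hi1, hi2⟩, _, hz1⟩ := hi
          exact ⟨⟨hi1, by omega⟩, hz1⟩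
      _ ≤ ∑ i ∈ Finset.Icc 1 T, z i := by
          calc ((Finset.Icc 1 T).filter fun i => z i = 1).card
              = ∑ i ∈ (Finset.Icc 1 T).filter fun i => z i = 1, 1 := (Finset.card_eq_sum_ones _)
            _ ≤ ∑ i ∈ (Finset.Icc 1 T).filter fun i => z i = 1, z i := by
                apply Finset.sum_le_sum; intro i hi
                simp only [Finset.mem_filter] at hi; omega
            _ ≤ ∑ i ∈ Finset.Icc 1 T, z i := Finset.sum_le_sum_of_subset (Finset.filter_subset _ _)
  · intro a _ b _ hab
    simp only [Finset.disjoint_left, Finset.mem_filter]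
    rintro i ⟨_, rfl, _⟩ ⟨_, h2, _⟩
    exact hab h2

lemma cntA_mono (g : ℕ → ℕ) (k : ℕ) {s t : ℕ} (h : s ≤ t) : cntA g k s ≤ cntA g k t := by
  apply Finset.card_le_card
  exact Finset.filter_subset_filter _ (Finset.Ico_subset_Ico le_rfl h)

lemma cntA_add_le (g : ℕ → ℕ) {k k' : ℕ} (h : k ≠ k') (t : ℕ) :
    cntA g k t + cntA g k' t ≤ t - 1 := by
  unfold cntA
  classical
  rw [← Finset.card_union_of_disjoint]
  · calc _ ≤ (Finset.Ico 1 t).card := Finset.card_le_card (by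
        intro i hi
        rcases Finset.mem_union.1 hi with hi | hi <;> exact (Finset.mem_filter.1 hi).1)
      _ = t - 1 := Nat.card_Ico 1 t
  · simp only [Finset.disjoint_left, Finset.mem_filter]
    rintro i ⟨_, rfl⟩ ⟨_, h2⟩
    exact h h2

lemma card_filter_Ico_split (p : ℕ → Prop) [DecidablePred p] {s t : ℕ} (h1 : 1 ≤ s) (h2 : s ≤ t) :
    ((Finset.Ico 1 t).filter p).card
      = ((Finset.Ico 1 s).filter p).card + ((Finset.Ico s t).filter p).card := by
  rw [← Finset.Ico_union_Ico_eq_Ico h1 h2, Finset.filter_union,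
    Finset.card_union_of_disjoint]
  exact (Finset.Ico_disjoint_Ico_consecutive 1 s t).mono
    (Finset.filter_subset _ _) (Finset.filter_subset _ _)


/-- let `τ` be the least index `1 ≤ t ≤ mn` with `w_t = 0`, and `τ := mn+1`
if `w_t = 1` for all `t`. Then
`Σ_{k=1}^n (X_{k,τ} + X_{k,mn+1}) ≥ (1/4)·(Σ_{i=1}^{mn} (1 − w_i)(z_i − 1/n))² − 6·Σ_{i=1}^{mn} z_i − 8m`. -/
theorem sum_Xproc_tau_add_final_ge
    (m n : ℕ) (hm : 0 < m) (hn : 0 < n)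
    (g z : ℕ → ℕ)
    (hg : ∀ i ∈ Finset.Icc 1 (m * n), g i ∈ Finset.Icc 1 n)
    (hz : ∀ i ∈ Finset.Icc 1 (m * n), z i = 0 ∨ z i = 1)
    (τ : ℕ)
    -- if some `1 ≤ t ≤ mn` has `w_t = 0`, then `τ` is the least such index
    (hτ₁ : (∃ t ∈ Finset.Icc 1 (m * n), wInd m n g t = 0) →
      τ ∈ Finset.Icc 1 (m * n) ∧ wInd m n g τ = 0 ∧
        ∀ s ∈ Finset.Icc 1 (m * n), wInd m n g s = 0 → τ ≤ s)
    -- otherwise, `τ = mn + 1`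
    (hτ₂ : (∀ t ∈ Finset.Icc 1 (m * n), wInd m n g t = 1) → τ = m * n + 1) :
    ∑ k ∈ Finset.Icc 1 n, (Xproc m n g z k τ + Xproc m n g z k (m * n + 1))
      ≥ 1 / 4 * (∑ i ∈ Finset.Icc 1 (m * n), (1 - wInd m n g i) * ((z i : ℝ) - 1 / n)) ^ 2
          - 6 * ∑ i ∈ Finset.Icc 1 (m * n), (z i : ℝ) - 8 * m := by
  classical
  set T := m * n with hT
  set c : ℝ := (Yval m n : ℝ) / n with hcdef
  have hnR : (0:ℝ) < n := by exact_mod_cast hn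
  have hc : 0 ≤ c := by positivity
  have hc2 : 2 * c ^ 2 ≤ 2 * (m : ℝ) := by
    have h1 : (Yval m n : ℝ) ≤ Real.sqrt m * n / 6 := Nat.floor_le (by positivity)
    have h2 : c ≤ Real.sqrt m / 6 := by
      rw [hcdef, div_le_div_iff₀ hnR (by norm_num : (0:ℝ) < 6)]
      nlinarith
    have h3 : Real.sqrt m ^ 2 = m := Real.sq_sqrt (by positivity)
    nlinarith [Real.sqrt_nonneg (m : ℝ)]
  -- the real-valued total of z
  set Z : ℝ := ∑ i ∈ Finset.Icc 1 T, (z i : ℝ) with hZ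
  have hτle : τ ≤ T + 1 := by
    by_cases hex : ∃ t ∈ Finset.Icc 1 T, wInd m n g t = 0
    · obtain ⟨hmem, _, _⟩ := hτ₁ hex
      have := (Finset.mem_Icc.1 hmem).2; omega
    · push_neg at hex
      have hall : ∀ t ∈ Finset.Icc 1 T, wInd m n g t = 1 := by
        intro t ht
        have := hex t ht
        unfold wInd at this ⊢
        split_ifs at this ⊢ with h
        · rfl
        · simp at this
      rw [hτ₂ hall]
  -- main reduction
  have hmain : ∑ k ∈ Finset.Icc 1 n, (Xproc m n g z k τ + Xproc m n g z k (T + 1))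
      ≥ (∑ k ∈ Finset.Icc 1 n,
          (fFun c ((cntB g z k τ : ℝ) - (cntA g k τ : ℝ) / n)
            + fFun c ((cntB g z k (T+1) : ℝ) - (cntA g k (T+1) : ℝ) / n)))
        - 6 * Z - 6 * m := by
    have expand : ∀ k, Xproc m n g z k τ + Xproc m n g z k (T + 1)
        = (fFun c ((cntB g z k τ : ℝ) - (cntA g k τ : ℝ) / n)
            + fFun c ((cntB g z k (T+1) : ℝ) - (cntA g k (T+1) : ℝ) / n))
          - 3 * ((cntB g z k τ : ℝ) + (cntB g z k (T+1) : ℝ))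
          - 3 / n * ((cntA g k τ : ℝ) + (cntA g k (T+1) : ℝ)) := by
      intro k; unfold Xproc; rw [hcdef]; ring
    rw [Finset.sum_congr rfl (fun k _ => expand k), Finset.sum_sub_distrib,
      Finset.sum_sub_distrib, ← Finset.mul_sum, ← Finset.mul_sum]
    have hBn : (∑ k ∈ Finset.Icc 1 n, ((cntB g z k τ : ℝ) + (cntB g z k (T+1) : ℝ)))
        ≤ 2 * Z := by
      have b1 := sum_cntB_le g z n τ T hτle
      have b2 := sum_cntB_le g z n (T+1) T le_rfl
      have : ((∑ k ∈ Finset.Icc 1 n, cntB g z k τ : ℕ) : ℝ)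
          + ((∑ k ∈ Finset.Icc 1 n, cntB g z k (T+1) : ℕ) : ℝ)
          ≤ 2 * ((∑ i ∈ Finset.Icc 1 T, z i : ℕ) : ℝ) := by
        have h := add_le_add b1 b2
        have h2 : ∑ k ∈ Finset.Icc 1 n, cntB g z k τ + ∑ k ∈ Finset.Icc 1 n, cntB g z k (T+1)
            ≤ 2 * ∑ i ∈ Finset.Icc 1 T, z i := by omega
        exact_mod_cast h2
      rw [Finset.sum_add_distrib]
      push_cast at this ⊢
      rw [hZ]; push_cast
      linarith
    have hAn : (∑ k ∈ Finset.Icc 1 n, ((cntA g k τ : ℝ) + (cntA g k (T+1) : ℝ)))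
        ≤ 2 * (m * n : ℝ) := by
      have a1 := sum_cntA_le g n τ
      have a2 := sum_cntA_le g n (T+1)
      have h1 : ∑ k ∈ Finset.Icc 1 n, cntA g k τ ≤ T := by omega
      have h2 : ∑ k ∈ Finset.Icc 1 n, cntA g k (T+1) ≤ T := by omega
      rw [Finset.sum_add_distrib]
      push_cast
      have c1 : ((∑ k ∈ Finset.Icc 1 n, cntA g k τ : ℕ) : ℝ) ≤ (T : ℝ) := by exact_mod_cast h1
      have c2 : ((∑ k ∈ Finset.Icc 1 n, cntA g k (T+1) : ℕ) : ℝ) ≤ (T : ℝ) := by exact_mod_cast h2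
      push_cast at c1 c2
      rw [hT] at c1 c2; push_cast at c1 c2
      linarith
    have h3n : 3 / (n:ℝ) * (∑ k ∈ Finset.Icc 1 n, ((cntA g k τ : ℝ) + (cntA g k (T+1) : ℝ)))
        ≤ 6 * m := by
      have hnonneg : (0:ℝ) ≤ 3 / (n:ℝ) := by positivity
      calc 3 / (n:ℝ) * _ ≤ 3 / (n:ℝ) * (2 * (m * n : ℝ)) := by
            exact mul_le_mul_of_nonneg_left hAn hnonneg
        _ = 6 * m := by field_simp; ring
    linarith
  by_cases hex : ∃ t ∈ Finset.Icc 1 T, wInd m n g t = 0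
  · -- case B: τ is the least index with w = 0
    obtain ⟨hmem, hwτ, hmin⟩ := hτ₁ hex
    obtain ⟨hτ1, hτT⟩ := Finset.mem_Icc.1 hmem
    set K := g τ with hKdef
    have hKmem : K ∈ Finset.Icc 1 n := hg τ hmem
    have halfK : T < 2 * cntA g K τ := by
      unfold wInd at hwτ
      split_ifs at hwτ with h
      · norm_num at hwτ
      · push_neg at h
        have h2 : ((T : ℕ) : ℝ) < 2 * ((cntA g K τ : ℕ) : ℝ) := by
          rw [hT]; push_cast; linarith
        exact_mod_cast h2
    have hw0 : ∀ i, 1 ≤ i → i ≤ T → (wInd m n g i = 0 ↔ (τ ≤ i ∧ g i = K)) := by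
      intro i h1 h2
      constructor
      · intro hwi
        have hτi : τ ≤ i := hmin i (Finset.mem_Icc.2 ⟨h1, h2⟩) hwi
        refine ⟨hτi, ?_⟩
        by_contra hne
        have hne' : K ≠ g i := fun h => hne h.symm
        have hdisj := cntA_add_le g hne' i
        have hgii : T < 2 * cntA g (g i) i := by
          unfold wInd at hwi
          split_ifs at hwi with h
          · norm_num at hwi
          · push_neg at h
            have h3 : ((T : ℕ) : ℝ) < 2 * ((cntA g (g i) i : ℕ) : ℝ) := by
              rw [hT]; push_cast; linarith
            exact_mod_cast h3
        have hmono := cntA_mono g K hτi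
        omega
      · rintro ⟨hτi, hgi⟩
        have hmono := cntA_mono g K hτi
        unfold wInd
        rw [hgi, if_neg]
        push_neg
        have h3 : ((T : ℕ) : ℝ) < 2 * ((cntA g K i : ℕ) : ℝ) := by exact_mod_cast by omega
        rw [hT] at h3; push_cast at h3
        linarith
    have hwsplit : ∀ i ∈ Finset.Icc 1 T,
        (1 - wInd m n g i) * ((z i : ℝ) - 1/n)
          = if τ ≤ i ∧ g i = K then ((z i : ℝ) - 1/n) else 0 := by
      intro i hi
      obtain ⟨h1, h2⟩ := Finset.mem_Icc.1 hi
      by_cases hcond : τ ≤ i ∧ g i = K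
      · rw [if_pos hcond, ((hw0 i h1 h2).2 hcond)]; ring
      · rw [if_neg hcond]
        have hone : wInd m n g i = 1 := by
          have hne : wInd m n g i ≠ 0 := fun h => hcond ((hw0 i h1 h2).1 h)
          unfold wInd at hne ⊢
          split_ifs at hne ⊢ with h
          · rfl
          · simp at hne
        rw [hone]; ring
    have hEset : (Finset.Icc 1 T).filter (fun i => τ ≤ i ∧ g i = K)
        = (Finset.Ico τ (T+1)).filter (fun i => g i = K) := by
      ext i
      simp only [Finset.mem_filter, Finset.mem_Icc, Finset.mem_Ico]
      constructor
      · rintro ⟨⟨_, h2⟩, h3, h4⟩; exact ⟨⟨h3, by omega⟩, h4⟩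
      · rintro ⟨⟨h1, h2⟩, h3⟩; exact ⟨⟨by omega, by omega⟩, h1, h3⟩
    set E := (Finset.Ico τ (T+1)).filter (fun i => g i = K) with hE
    have hSsum : (∑ i ∈ Finset.Icc 1 T, (1 - wInd m n g i) * ((z i:ℝ) - 1/n))
        = ∑ i ∈ E, ((z i : ℝ) - 1/n) := by
      rw [Finset.sum_congr rfl hwsplit, ← Finset.sum_filter, hEset]
    have hAsplit : cntA g K (T+1) = cntA g K τ + E.card := by
      unfold cntA
      exact card_filter_Ico_split _ hτ1 (by omega)
    have hBsplit : cntB g z K (T+1) = cntB g z K τ + (E.filter (fun i => z i = 1)).card := by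
      unfold cntB
      rw [hE, Finset.filter_filter]
      exact card_filter_Ico_split _ hτ1 (by omega)
    have hzsum : ∑ i ∈ E, (z i : ℝ) = ((E.filter (fun i => z i = 1)).card : ℝ) := by
      rw [Finset.card_filter]
      push_cast
      apply Finset.sum_congr rfl
      intro i hi
      have hiT : i ∈ Finset.Icc 1 T := by
        rw [hE] at hi
        simp only [Finset.mem_filter, Finset.mem_Ico] at hi
        exact Finset.mem_Icc.2 ⟨by omega, by omega⟩
      rcases hz i hiT with h | h <;> simp [h]
    have hSval : ∑ i ∈ E, ((z i:ℝ) - 1/n)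
        = ((cntB g z K (T+1) : ℝ) - (cntA g K (T+1) : ℝ)/n)
          - ((cntB g z K τ : ℝ) - (cntA g K τ : ℝ)/n) := by
      have hA' : (cntA g K (T+1) : ℝ) = (cntA g K τ : ℝ) + (E.card : ℝ) := by
        exact_mod_cast hAsplit
      have hB' : (cntB g z K (T+1) : ℝ)
          = (cntB g z K τ : ℝ) + ((E.filter (fun i => z i = 1)).card : ℝ) := by
        exact_mod_cast hBsplit
      rw [Finset.sum_sub_distrib, hzsum, Finset.sum_const, nsmul_eq_mul, hA', hB']
      ring
    have hsingle : fFun c ((cntB g z K τ : ℝ) - (cntA g K τ : ℝ)/n)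
          + fFun c ((cntB g z K (T+1) : ℝ) - (cntA g K (T+1) : ℝ)/n)
        ≤ ∑ k ∈ Finset.Icc 1 n,
          (fFun c ((cntB g z k τ : ℝ) - (cntA g k τ : ℝ) / n)
            + fFun c ((cntB g z k (T+1) : ℝ) - (cntA g k (T+1) : ℝ) / n)) :=
      Finset.single_le_sum
        (f := fun k => fFun c ((cntB g z k τ : ℝ) - (cntA g k τ : ℝ) / n)
          + fFun c ((cntB g z k (T+1) : ℝ) - (cntA g k (T+1) : ℝ) / n))
        (fun k _ => add_nonneg (fFun_nonneg _ _) (fFun_nonneg _ _)) hKmem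
    have hf := fFun_add_ge c ((cntB g z K τ:ℝ) - (cntA g K τ:ℝ)/n)
      ((cntB g z K (T+1):ℝ) - (cntA g K (T+1):ℝ)/n) hc
    rw [ge_iff_le, hSsum, hSval]
    linarith
  · -- case A: all w = 1
    push_neg at hex
    have hall : ∀ t ∈ Finset.Icc 1 T, wInd m n g t = 1 := by
      intro t ht
      have := hex t ht
      unfold wInd at this ⊢
      split_ifs at this ⊢ with h
      · rfl
      · simp at this
    have hS : ∑ i ∈ Finset.Icc 1 T, (1 - wInd m n g i) * ((z i : ℝ) - 1 / n) = 0 := by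
      apply Finset.sum_eq_zero
      intro i hi
      rw [hall i hi]; ring
    have hfpos : (0:ℝ) ≤ ∑ k ∈ Finset.Icc 1 n,
        (fFun c ((cntB g z k τ : ℝ) - (cntA g k τ : ℝ) / n)
          + fFun c ((cntB g z k (T+1) : ℝ) - (cntA g k (T+1) : ℝ) / n)) :=
      Finset.sum_nonneg (fun k _ => add_nonneg (fFun_nonneg _ _) (fFun_nonneg _ _))
    rw [ge_iff_le, hS]
    have hmpos : (0:ℝ) ≤ m := by positivity
    linarith
end
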